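/- Let K be a commutative ring, P a finite poset, V ⊆ P a cosieve with inclusion v : V ↪ P, F ∈ (K-Mod)^P and G ∈ (K-Mod)^V. Then the canonical projection morphism v_!(v^* F ⊗ G) → F ⊗ v_! G, defined dually using the unit and counit of the adjunction (v_!, v^*) and the fact that v^* commutes with the pointwise tensor product, is an isomorphism. -/

import Mathlib

open CategoryTheory CategoryTheory.Limits CategoryTheory.MonoidalCategory

universe u

variable (K : Type u) [CommRing K] (P : Type u) [PartialOrder P]

/-- The inclusion functor of a subposet (a subset of `P` with the induced order). -/
def inclFunctor (V : Set P) : (↥V) ⥤ P :=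
  (Subtype.mono_coe (· ∈ V)).functor

/-- The canonical projection morphism `v_!(v^* F ⊗ G) → F ⊗ v_! G`: the adjunction
transpose (built dually from the unit and counit of `(v_!, v^*)` and the fact that `v^*`
commutes with the pointwise tensor product). -/
noncomputable def projMor (V : Set P) (F : P ⥤ ModuleCat.{u} K)
    (G : (↥V) ⥤ ModuleCat.{u} K) :
    (inclFunctor P V).lan.obj ((inclFunctor P V ⋙ F) ⊗ G) ⟶
      F ⊗ ((inclFunctor P V).lan.obj G) :=
  (((inclFunctor P V).lanAdjunction (ModuleCat.{u} K)).homEquiv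
      ((inclFunctor P V ⋙ F) ⊗ G) (F ⊗ ((inclFunctor P V).lan.obj G))).symm
    (((inclFunctor P V ⋙ F) ◁
        (((inclFunctor P V).lanAdjunction (ModuleCat.{u} K)).unit.app G)) ≫
      eqToHom (show (inclFunctor P V ⋙ F) ⊗ (inclFunctor P V ⋙ (inclFunctor P V).lan.obj G)
          = inclFunctor P V ⋙ (F ⊗ ((inclFunctor P V).lan.obj G)) from rfl))

instance (V : Set P) : (inclFunctor P V).Faithful :=
  ⟨fun _ => Subsingleton.elim _ _⟩

instance (V : Set P) : (inclFunctor P V).Full :=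
  ⟨fun {_ _} f => ⟨homOfLE (Subtype.coe_le_coe.mp (leOfHom f)), Subsingleton.elim _ _⟩⟩

/-- The point of a colimit cocone over an empty diagram is initial. -/
noncomputable def isInitialOfIsColimitOfIsEmpty {J : Type*} [Category J] {C : Type*} [Category C]
    [IsEmpty J] {F : J ⥤ C} {c : Cocone F} (hc : IsColimit c) : IsInitial c.pt :=
  IsInitial.ofUniqueHom
    (fun Y => hc.desc ⟨Y, ⟨fun j => isEmptyElim j, fun j => isEmptyElim j⟩⟩)
    (fun Y m => hc.uniq ⟨Y, ⟨fun j => isEmptyElim j, fun j => isEmptyElim j⟩⟩ m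
      (fun j => isEmptyElim j))

lemma subsingleton_of_isInitial {M : ModuleCat.{u} K} (h : IsInitial M) : Subsingleton M := by
  have h1 : (𝟙 M) = (0 : M ⟶ M) := h.hom_ext _ _
  have h2 : ∀ x : M, x = 0 := fun x => by
    simpa using congrArg (fun f : M ⟶ M => (f : M → M) x) h1
  exact ⟨fun a b => by rw [h2 a, h2 b]⟩

/-- Over a point which is not in the cosieve `V`, any left Kan extension from `V` vanishes. -/
lemma subsingleton_lan_obj (V : Set P)
    (hV : ∀ ⦃a b : P⦄, a ≤ b → a ∈ V → b ∈ V) (H : (↥V) ⥤ ModuleCat.{u} K)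
    (p : P) (hp : p ∉ V) :
    Subsingleton (((inclFunctor P V).lan.obj H).obj p) := by
  have : IsEmpty (CostructuredArrow (inclFunctor P V) p) :=
    ⟨fun X => hp (hV (leOfHom X.hom) X.left.2)⟩
  have hc := (Functor.isPointwiseLeftKanExtensionLeftKanExtensionUnit (inclFunctor P V) H) p
  exact subsingleton_of_isInitial K (isInitialOfIsColimitOfIsEmpty hc)

/-- The counit of the Kan extension adjunction is an isomorphism at any functor which
vanishes outside of the cosieve `V`. -/
lemma isIso_counit_app (V : Set P)
    (hV : ∀ ⦃a b : P⦄, a ≤ b → a ∈ V → b ∈ V) (B : P ⥤ ModuleCat.{u} K)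
    (hB : ∀ p : P, p ∉ V → IsZero (B.obj p)) :
    IsIso (((inclFunctor P V).lanAdjunction (ModuleCat.{u} K)).counit.app B) := by
  let v : (↥V) ⥤ P := inclFunctor P V
  let adj := v.lanAdjunction (ModuleCat.{u} K)
  let R := (Functor.whiskeringLeft (↥V) P (ModuleCat.{u} K)).obj v
  have h1 : IsIso (R.map (adj.counit.app B)) := by
    have h2 : IsIso (adj.unit.app (R.obj B) ≫ R.map (adj.counit.app B)) := by
      rw [adj.right_triangle_components B]
      exact IsIso.id _
    exact IsIso.of_isIso_comp_left (adj.unit.app (R.obj B)) (R.map (adj.counit.app B))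
  have happ : ∀ p : P, IsIso ((adj.counit.app B).app p) := fun p => by
    by_cases hp : p ∈ V
    · exact inferInstanceAs (IsIso ((R.map (adj.counit.app B)).app ⟨p, hp⟩))
    · have hss := subsingleton_lan_obj K P V hV (R.obj B) p hp
      have hX : IsZero ((v.lan.obj (R.obj B)).obj p) :=
        ModuleCat.isZero_of_subsingleton _
      have hY := hB p hp
      have heq : (adj.counit.app B).app p = (hX.isoZero ≪≫ hY.isoZero.symm).hom :=
        hX.eq_of_src _ _
      rw [heq]
      infer_instance
  exact NatIso.isIso_of_isIso_app _

/-- Let `V ⊆ P` be a cosieve in a finite poset `P`, `F ∈ (K-Mod)^P` and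
`G ∈ (K-Mod)^V`.  Then the canonical projection morphism `v_!(v^* F ⊗ G) → F ⊗ v_! G` is an
isomorphism. -/
theorem statement_17 [Fintype P] (V : Set P)
    (hV : ∀ ⦃a b : P⦄, a ≤ b → a ∈ V → b ∈ V) (F : P ⥤ ModuleCat.{u} K)
    (G : (↥V) ⥤ ModuleCat.{u} K) :
    IsIso (projMor K P V F G) := by
  have hproj : projMor K P V F G =
      (inclFunctor P V).lan.map (((inclFunctor P V ⋙ F) ◁
          (((inclFunctor P V).lanAdjunction (ModuleCat.{u} K)).unit.app G)) ≫
        eqToHom (show (inclFunctor P V ⋙ F) ⊗ (inclFunctor P V ⋙ (inclFunctor P V).lan.obj G)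
          = inclFunctor P V ⋙ (F ⊗ ((inclFunctor P V).lan.obj G)) from rfl)) ≫
      ((inclFunctor P V).lanAdjunction (ModuleCat.{u} K)).counit.app
        (F ⊗ ((inclFunctor P V).lan.obj G)) :=
    Adjunction.homEquiv_counit _ _ _ _
  rw [hproj]
  have hcounit : IsIso ((((inclFunctor P V).lanAdjunction (ModuleCat.{u} K)).counit.app
      (F ⊗ ((inclFunctor P V).lan.obj G)))) := by
    refine isIso_counit_app K P V hV _ (fun p hp => ?_)
    have hss := subsingleton_lan_obj K P V hV G p hp
    have hz : IsZero (ModuleCat.of K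
        (TensorProduct K (F.obj p) (((inclFunctor P V).lan.obj G).obj p))) :=
      ModuleCat.isZero_of_subsingleton _
    exact hz
  infer_instance
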